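/- arXiv:2604.18108 — 9 statements merged into one kernel-verified Lean document; each statement's English description precedes it below -/
import Mathlib

section
/- Every need-adjusted geometric rule φ^λ satisfies lowest rank consistency: if agent 1 leaves the hierarchy after receiving φ^λ_1(M,r,z) and agent 2's revenue becomes r_2 + r_1 - φ^λ_1(M,r,z), then the allocation of φ^λ applied to the reduced problem on {2,...,m} coincides with the original allocation for all agents 2,...,m. -/
/-- The need-adjusted geometric rule with parameter `lam` on the hierarchy
`{0, ..., m-1}` (agent `m-1` is the top-ranked agent). -/
noncomputable def geomRule (lam : ℝ) (m : ℕ) (r z : ℕ → ℝ) (i : ℕ) : ℝ :=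
  if i + 1 < m then
    z i + lam * ∑ j ∈ Finset.range (i + 1), (1 - lam) ^ (i - j) * (r j - z j)
  else
    r i + ∑ j ∈ Finset.range (m - 1), (1 - lam) ^ (m - 1 - j) * (r j - z j)

/-!
Write `d j = r j - z j` for agent `j`'s surplus and `C i = ∑_{j ≤ i} (1 - λ)^(i - j) d j`
(`geomCarry`) for the surplus accumulated at agent `i`, so that `C (i + 1) = (1 - λ) C i + d (i + 1)`.
Every agent below the top receives `z i + λ C i` and the top agent receives `z i + C i`. Agent 1
leaves with `z 0 + λ d 0`, so the new lowest agent's surplus is `d 1 + (1 - λ) d 0 = C 1`; from then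
on the reduced problem obeys the same recursion, hence its accumulated surpluses are those of the
original problem shifted by one, and so are the allocations.
-/

open Finset

section GeomCarry

variable {R : Type*} [Semiring R]

def geomCarry (q : R) (d : ℕ → R) (n : ℕ) : R :=
  ∑ j ∈ range (n + 1), q ^ (n - j) * d j

@[simp]
theorem geomCarry_zero (q : R) (d : ℕ → R) : geomCarry q d 0 = d 0 := by
  simp [geomCarry]

theorem geomCarry_succ (q : R) (d : ℕ → R) (n : ℕ) :
    geomCarry q d (n + 1) = q * geomCarry q d n + d (n + 1) := by
  rw [geomCarry, sum_range_succ, Nat.sub_self, pow_zero, one_mul, geomCarry, mul_sum]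
  congr 1
  refine sum_congr rfl fun j hj => ?_
  rw [← mul_assoc, ← pow_succ', Nat.sub_add_comm (Nat.lt_succ_iff.mp (mem_range.mp hj))]

theorem geomCarry_shift (q : R) (d d' : ℕ → R) (h₀ : d' 0 = q * d 0 + d 1)
    (hsucc : ∀ j, d' (j + 1) = d (j + 2)) (n : ℕ) :
    geomCarry q d' n = geomCarry q d (n + 1) := by
  induction n with
  | zero => rw [geomCarry_zero, h₀, geomCarry_succ, geomCarry_zero]
  | succ n ih => rw [geomCarry_succ, ih, hsucc, geomCarry_succ q d (n + 1)]

end GeomCarry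

section GeomRule

variable (lam : ℝ) (r z : ℕ → ℝ)

theorem geomRule_of_succ_lt {m i : ℕ} (hi : i + 1 < m) :
    geomRule lam m r z i = z i + lam * geomCarry (1 - lam) (fun j => r j - z j) i := by
  rw [geomRule, if_pos hi, geomCarry]

theorem geomRule_last (n : ℕ) :
    geomRule lam (n + 1) r z n = z n + geomCarry (1 - lam) (fun j => r j - z j) n := by
  rw [geomRule, if_neg (lt_irrefl _), geomCarry, sum_range_succ, Nat.add_sub_cancel]
  simp only [Nat.sub_self, pow_zero, one_mul]
  ring

end GeomRule

theorem geometric_rule_lowest_rank_consistency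
    (lam : ℝ) (hlam : lam ∈ Set.Icc (0:ℝ) 1)
    (m : ℕ) (hm : 2 ≤ m) (r z : ℕ → ℝ)
    (hval : ∀ i < m, 0 ≤ z i ∧ z i ≤ r i) :
    (∀ j < m - 1, 0 ≤ z (j + 1) ∧
      z (j + 1) ≤ (fun j => if j = 0 then r 1 + r 0 - geomRule lam m r z 0
                            else r (j + 1)) j) ∧
    ∀ i, 1 ≤ i → i < m →
      geomRule lam m r z i =
        geomRule lam (m - 1)
          (fun j => if j = 0 then r 1 + r 0 - geomRule lam m r z 0 else r (j + 1))
          (fun j => z (j + 1)) (i - 1) := by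
  have hx₀ : geomRule lam m r z 0 = z 0 + lam * (r 0 - z 0) := by
    rw [geomRule_of_succ_lt lam r z (by omega), geomCarry_zero]
  have hr₀ : r 1 + r 0 - geomRule lam m r z 0 = r 1 + (1 - lam) * (r 0 - z 0) := by
    rw [hx₀]; ring
  refine ⟨fun j hj => ⟨(hval (j + 1) (by omega)).1, ?_⟩, fun i hi₁ him => ?_⟩
  · rcases Nat.eq_zero_or_pos j with rfl | hj₀
    · have hleft : 0 ≤ (1 - lam) * (r 0 - z 0) :=
        mul_nonneg (sub_nonneg.mpr hlam.2) (sub_nonneg.mpr (hval 0 (by omega)).2)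
      simp only [if_pos, hr₀]
      linarith [(hval 1 (by omega)).2]
    · simpa [hj₀.ne'] using (hval (j + 1) (by omega)).2
  · set r' := fun j => if j = 0 then r 1 + r 0 - geomRule lam m r z 0 else r (j + 1)
    have hcarry (n : ℕ) :
        geomCarry (1 - lam) (fun j => r' j - z (j + 1)) n =
          geomCarry (1 - lam) (fun j => r j - z j) (n + 1) :=
      geomCarry_shift _ _ _ (by simp only [r', if_pos, hr₀]; ring) (fun j => by simp [r']) n
    obtain ⟨k, rfl⟩ : ∃ k, i = k + 1 := ⟨i - 1, by omega⟩
    rw [Nat.add_sub_cancel]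
    rcases (Nat.add_one_le_iff.mpr him).lt_or_eq with hlt | rfl
    · rw [geomRule_of_succ_lt lam r z hlt, geomRule_of_succ_lt lam r' _ (by omega), hcarry]
    · rw [geomRule_last, Nat.add_sub_cancel, geomRule_last, hcarry]
end

section
/- Every need-adjusted geometric rule φ^λ satisfies highest rank splitting neutrality: if the top agent m splits into two agents m and m+1 with r'_m + r'_{m+1} = r_m, z'_m + z'_{m+1} = z_m, and r'_j ≥ z'_j for j = m, m+1, then the allocations to all agents 1, ..., m-1 are unchanged. -/
/-! Below the top, an agent's award depends only on the claims and needs of agents ranked no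
higher, so changes at the top of the hierarchy cannot reach it. -/

theorem geomRule_of_lt_top {lam : ℝ} {m : ℕ} {r z : ℕ → ℝ} {i : ℕ} (hi : i + 1 < m) :
    geomRule lam m r z i =
      z i + lam * ∑ j ∈ Finset.range (i + 1), (1 - lam) ^ (i - j) * (r j - z j) :=
  if_pos hi

theorem geomRule_congr_of_lt_top {lam : ℝ} {m n : ℕ} {r z r' z' : ℕ → ℝ} {i : ℕ}
    (him : i + 1 < m) (hin : i + 1 < n) (hr : ∀ j ≤ i, r j = r' j) (hz : ∀ j ≤ i, z j = z' j) :
    geomRule lam m r z i = geomRule lam n r' z' i := by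
  rw [geomRule_of_lt_top him, geomRule_of_lt_top hin, hz i le_rfl]
  congr 2
  refine Finset.sum_congr rfl fun j hj => ?_
  have hji : j ≤ i := Nat.lt_succ_iff.mp (Finset.mem_range.mp hj)
  rw [hr j hji, hz j hji]

theorem geometric_rule_highest_rank_splitting_neutrality_general
    (lam : ℝ)
    (m : ℕ) (r z r' z' : ℕ → ℝ)
    (hagree : ∀ j, j + 1 < m → r' j = r j ∧ z' j = z j) :
    ∀ i, i + 1 < m → geomRule lam (m + 1) r' z' i = geomRule lam m r z i := by
  intro i hi
  exact geomRule_congr_of_lt_top (by omega) hi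
    (fun j hj => (hagree j (by omega)).1) (fun j hj => (hagree j (by omega)).2)

theorem geometric_rule_highest_rank_splitting_neutrality
    (lam : ℝ) (hlam : lam ∈ Set.Icc (0:ℝ) 1)
    (m : ℕ) (hm : 1 ≤ m) (r z r' z' : ℕ → ℝ)
    (hval : ∀ i < m, 0 ≤ z i ∧ z i ≤ r i)
    (hval' : ∀ i < m + 1, 0 ≤ z' i ∧ z' i ≤ r' i)
    (hagree : ∀ j, j + 1 < m → r' j = r j ∧ z' j = z j)
    (hr : r' (m - 1) + r' m = r (m - 1))
    (hz : z' (m - 1) + z' m = z (m - 1)) :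
    ∀ i, i + 1 < m → geomRule lam (m + 1) r' z' i = geomRule lam m r z i :=
  geometric_rule_highest_rank_splitting_neutrality_general lam m r z r' z' hagree
end

section
/- (Characterization of need-adjusted geometric rules) If a rule φ on the domain of linear hierarchy problems with needs satisfies needs lower bound, lowest rank consistency, highest rank independence, highest rank splitting neutrality, and bilateral linearity, then there exists λ ∈ [0,1] such that φ = φ^λ, the need-adjusted geometric rule with parameter λ. -/
/-- A valid linear hierarchy problem with needs: at least one agent,
nonnegative needs, and each agent's need is covered by his own revenue. -/
def Valid (m : ℕ) (r z : ℕ → ℝ) : Prop :=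
  0 < m ∧ ∀ i < m, 0 ≤ z i ∧ z i ≤ r i

/-!
For two agents, highest rank independence reduces agent `0`'s award to problems with constant
`r` and `z`, where bilateral linearity makes it linear in `(r₀, z₀)`; the needs lower bound pins
it down at `r₀ = z₀`, so it equals `z₀ + λ (r₀ - z₀)`, with `λ` the award of agent `0` when
`r = (1, 1)` and `z = 0`. With more agents, merging the two top ones (splitting neutrality) shows
that agent `0` still receives `z₀ + λ (r₀ - z₀)`. Lowest rank consistency then hands the other
agents to a problem with one agent fewer, whose lowest revenue carries the residual
`(1 - λ) (r₀ - z₀)` upwards; the geometric rule is consistent in exactly this way, so induction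
on the number of agents concludes.
-/

open Finset

noncomputable def discountedSum (c : ℝ) (D : ℕ → ℝ) (n : ℕ) : ℝ :=
  ∑ j ∈ range (n + 1), c ^ (n - j) * D j

section DiscountedSum

variable (c : ℝ) (D : ℕ → ℝ)

lemma discountedSum_zero : discountedSum c D 0 = D 0 := by
  simp [discountedSum]

lemma sum_range_pow_succ_sub_mul (n : ℕ) :
    ∑ j ∈ range (n + 1), c ^ (n + 1 - j) * D j = c * discountedSum c D n := by
  rw [discountedSum, mul_sum]
  refine sum_congr rfl fun j hj => ?_
  rw [Nat.succ_sub (Nat.lt_succ_iff.mp (mem_range.mp hj)), pow_succ]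
  ring

lemma discountedSum_succ (n : ℕ) :
    discountedSum c D (n + 1) = c * discountedSum c D n + D (n + 1) := by
  rw [discountedSum, sum_range_succ, sum_range_pow_succ_sub_mul]
  simp

variable {c D} in
lemma discountedSum_shift {D' : ℕ → ℝ} (h0 : D' 0 = D 1 + c * D 0)
    (hsucc : ∀ j, D' (j + 1) = D (j + 2)) (n : ℕ) :
    discountedSum c D' n = discountedSum c D (n + 1) := by
  induction n with
  | zero => rw [discountedSum_zero, discountedSum_succ, discountedSum_zero, h0]; ring
  | succ n ih => rw [discountedSum_succ, ih, hsucc, discountedSum_succ c D (n + 1)]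

end DiscountedSum

/-- The revenues of the problem left when the lowest agent leaves with award `x` and hands his
residual to the next agent. -/
def dropLowest (r : ℕ → ℝ) (x : ℝ) : ℕ → ℝ :=
  fun j => if j = 0 then r 1 + r 0 - x else r (j + 1)

def mergeTop (n : ℕ) (r : ℕ → ℝ) : ℕ → ℝ :=
  fun j => if j = n - 1 then r (n - 1) + r n else r j

lemma valid_dropLowest {n : ℕ} {r z : ℕ → ℝ} {x : ℝ} (hn : 0 < n) (hv : Valid (n + 1) r z)
    (hx : x ≤ r 0) : Valid n (dropLowest r x) (fun j => z (j + 1)) := by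
  refine ⟨hn, fun i hi => ⟨(hv.2 (i + 1) (by omega)).1, ?_⟩⟩
  rcases i with _ | i
  · have := (hv.2 1 (by omega)).2
    simp only [dropLowest, if_pos]
    linarith
  · exact (hv.2 (i + 2) (by omega)).2

lemma valid_mergeTop {n : ℕ} {r z : ℕ → ℝ} (hn : 0 < n) (hv : Valid (n + 1) r z) :
    Valid n (mergeTop n r) (mergeTop n z) := by
  refine ⟨hn, fun i hi => ?_⟩
  by_cases h : i = n - 1
  · obtain ⟨h₁, h₂⟩ := hv.2 (n - 1) (by omega)
    obtain ⟨h₃, h₄⟩ := hv.2 n (by omega)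
    simp only [mergeTop, if_pos h]
    constructor <;> linarith
  · simpa only [mergeTop, if_neg h] using hv.2 i (by omega)

section GeomRule

variable {lam : ℝ} {m : ℕ} {r z : ℕ → ℝ}

lemma geomRule_of_lt {i : ℕ} (h : i + 1 < m) :
    geomRule lam m r z i = z i + lam * discountedSum (1 - lam) (fun j => r j - z j) i := by
  rw [geomRule, if_pos h]
  rfl

lemma geomRule_top (n : ℕ) :
    geomRule lam (n + 2) r z (n + 1) =
      r (n + 1) + (1 - lam) * discountedSum (1 - lam) (fun j => r j - z j) n := by
  rw [geomRule, if_neg (by omega), show n + 2 - 1 = n + 1 by omega,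
    ← sum_range_pow_succ_sub_mul]

lemma geomRule_one : geomRule lam 1 r z 0 = r 0 := by
  simp [geomRule]

lemma geomRule_zero (h : 1 < m) : geomRule lam m r z 0 = z 0 + lam * (r 0 - z 0) := by
  rw [geomRule_of_lt h, discountedSum_zero]

lemma geomRule_zero_le (hlam : lam ≤ 1) (h : 1 < m) (hv : Valid m r z) :
    geomRule lam m r z 0 ≤ r 0 := by
  obtain ⟨-, hzr⟩ := hv.2 0 (by omega)
  rw [geomRule_zero h]
  nlinarith

/-- The geometric rule is lowest rank consistent. -/
lemma geomRule_succ_eq_dropLowest {n i : ℕ} (hi : i < n) :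
    geomRule lam (n + 1) r z (i + 1) =
      geomRule lam n (dropLowest r (geomRule lam (n + 1) r z 0)) (fun j => z (j + 1)) i := by
  have hshift (k : ℕ) :
      discountedSum (1 - lam)
          (fun j => dropLowest r (geomRule lam (n + 1) r z 0) j - z (j + 1)) k =
        discountedSum (1 - lam) (fun j => r j - z j) (k + 1) := by
    refine discountedSum_shift ?_ (fun j => by simp [dropLowest]) k
    simp only [dropLowest, if_pos, geomRule_zero (by omega : 1 < n + 1)]
    ring
  rcases Nat.lt_or_ge (i + 1) n with hlt | hge
  · rw [geomRule_of_lt (by omega), geomRule_of_lt hlt, hshift]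
  obtain rfl : n = i + 1 := by omega
  rcases i with _ | k
  · rw [geomRule_top, geomRule_one, discountedSum_zero]
    simp only [dropLowest, if_pos, geomRule_zero (by omega : 1 < 0 + 1 + 1)]
    ring
  · rw [geomRule_top, geomRule_top, hshift]
    simp [dropLowest]

end GeomRule

section Axioms

variable (φ : ℕ → (ℕ → ℝ) → (ℕ → ℝ) → ℕ → ℝ)

def IsRule : Prop :=
  ∀ m r z, Valid m r z →
    (∀ i < m, 0 ≤ φ m r z i) ∧ ∑ i ∈ range m, φ m r z i = ∑ i ∈ range m, r i

def NeedsLowerBound : Prop :=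
  ∀ m r z, Valid m r z → ∀ i < m, z i ≤ φ m r z i

def LowestRankConsistent : Prop :=
  ∀ m r z, Valid m r z → 2 ≤ m →
    Valid (m - 1) (dropLowest r (φ m r z 0)) (fun j => z (j + 1)) →
    ∀ i, 1 ≤ i → i < m →
      φ m r z i = φ (m - 1) (dropLowest r (φ m r z 0)) (fun j => z (j + 1)) (i - 1)

def HighestRankIndependent : Prop :=
  ∀ m r z r' z', Valid m r z → Valid m r' z' →
    (∀ i, i + 1 < m → r i = r' i ∧ z i = z' i) →
    ∀ i, i + 1 < m → φ m r z i = φ m r' z' i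

def HighestRankSplittingNeutral : Prop :=
  ∀ m r z r' z', Valid m r z → Valid (m + 1) r' z' →
    (∀ j, j + 1 < m → r' j = r j ∧ z' j = z j) →
    r' (m - 1) + r' m = r (m - 1) →
    z' (m - 1) + z' m = z (m - 1) →
    ∀ i, i + 1 < m → φ (m + 1) r' z' i = φ m r z i

def BilateralLinear : Prop :=
  ∀ r z r' z' α β, 0 < α → 0 < β → Valid 2 r z → Valid 2 r' z' →
    ∀ i < 2,
      φ 2 (fun j => α * r j + β * r' j) (fun j => α * z j + β * z' j) i =
        α * φ 2 r z i + β * φ 2 r' z' i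

end Axioms

section TwoAgents

variable {φ : ℕ → (ℕ → ℝ) → (ℕ → ℝ) → ℕ → ℝ}

lemma valid_two_const {a b : ℝ} (hb : 0 ≤ b) (hba : b ≤ a) :
    Valid 2 (fun _ => a) (fun _ => b) :=
  ⟨two_pos, fun _ _ => ⟨hb, hba⟩⟩

lemma IsRule.apply_one (h : IsRule φ) {r z : ℕ → ℝ} (hv : Valid 1 r z) : φ 1 r z 0 = r 0 := by
  simpa using (h 1 r z hv).2

lemma IsRule.add_apply_two (h : IsRule φ) {r z : ℕ → ℝ} (hv : Valid 2 r z) :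
    φ 2 r z 0 + φ 2 r z 1 = r 0 + r 1 := by
  simpa [sum_range_succ] using (h 2 r z hv).2

lemma NeedsLowerBound.apply_two_one_one (h : NeedsLowerBound φ) (hφ : IsRule φ) :
    φ 2 (fun _ => 1) (fun _ => 1) 0 = 1 := by
  have hv : Valid 2 (fun _ => (1 : ℝ)) (fun _ => 1) := valid_two_const zero_le_one le_rfl
  have h₀ := h 2 _ _ hv 0 two_pos
  have h₁ := h 2 _ _ hv 1 one_lt_two
  have := hφ.add_apply_two hv
  linarith

lemma HighestRankIndependent.apply_two_zero (h : HighestRankIndependent φ) {r z : ℕ → ℝ}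
    (hv : Valid 2 r z) : φ 2 r z 0 = φ 2 (fun _ => r 0) (fun _ => z 0) 0 := by
  obtain ⟨hz, hzr⟩ := hv.2 0 two_pos
  refine h 2 r z _ _ hv (valid_two_const hz hzr) (fun i hi => ?_) 0 one_lt_two
  obtain rfl : i = 0 := by omega
  exact ⟨rfl, rfl⟩

/-- The shifts by `(2, 1) = (1, 1) + (1, 0)` keep all coefficients positive. -/
lemma BilateralLinear.apply_two_const (h : BilateralLinear φ) {a b : ℝ} (hb : 0 ≤ b)
    (hba : b ≤ a) :
    φ 2 (fun _ => a) (fun _ => b) 0 =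
      b * φ 2 (fun _ => 1) (fun _ => 1) 0 + (a - b) * φ 2 (fun _ => 1) (fun _ => 0) 0 := by
  have v₁₁ : Valid 2 (fun _ => (1 : ℝ)) (fun _ => 1) := valid_two_const zero_le_one le_rfl
  have v₁₀ : Valid 2 (fun _ => (1 : ℝ)) (fun _ => 0) := valid_two_const le_rfl zero_le_one
  have v₂₁ : Valid 2 (fun _ => (2 : ℝ)) (fun _ => 1) := valid_two_const zero_le_one one_le_two
  have hshift := h _ _ _ _ 1 1 one_pos one_pos (valid_two_const hb hba) v₂₁ 0 two_pos
  have hdecomp := h _ _ _ _ (b + 1) (a - b + 1) (by linarith) (by linarith) v₁₁ v₁₀ 0 two_pos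
  have hunit := h _ _ _ _ 1 1 one_pos one_pos v₁₁ v₁₀ 0 two_pos
  ring_nf at hshift hdecomp hunit ⊢
  linarith

theorem exists_apply_two_zero_eq (hφ : IsRule φ) (hnlb : NeedsLowerBound φ)
    (hhri : HighestRankIndependent φ) (hbl : BilateralLinear φ) :
    ∃ lam ∈ Set.Icc (0 : ℝ) 1,
      ∀ r z, Valid 2 r z → φ 2 r z 0 = z 0 + lam * (r 0 - z 0) := by
  refine ⟨φ 2 (fun _ => 1) (fun _ => 0) 0, ⟨?_, ?_⟩, fun r z hv => ?_⟩
  · exact (hφ 2 _ _ (valid_two_const le_rfl zero_le_one)).1 0 two_pos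
  · have hv : Valid 2 (fun j => if j = 0 then 1 else 0) (fun _ => 0) :=
      ⟨two_pos, fun i _ => ⟨le_rfl, by dsimp only; split_ifs <;> norm_num⟩⟩
    have hlam := hhri.apply_two_zero hv
    have hsum := hφ.add_apply_two hv
    have h₁ := (hφ 2 _ _ hv).1 1 one_lt_two
    simp only [if_pos, one_ne_zero, if_false] at hlam hsum
    linarith
  · rw [hhri.apply_two_zero hv, hbl.apply_two_const (hv.2 0 two_pos).1 (hv.2 0 two_pos).2,
      hnlb.apply_two_one_one hφ]
    ring

end TwoAgents

section Induction

variable {φ : ℕ → (ℕ → ℝ) → (ℕ → ℝ) → ℕ → ℝ} {lam : ℝ}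

lemma HighestRankSplittingNeutral.apply_zero (h : HighestRankSplittingNeutral φ) {n : ℕ}
    {r z : ℕ → ℝ} (hn : 1 < n) (hv : Valid (n + 1) r z) :
    φ (n + 1) r z 0 = φ n (mergeTop n r) (mergeTop n z) 0 :=
  h n _ _ r z (valid_mergeTop (by omega) hv) hv
    (fun j hj => ⟨(if_neg (by omega)).symm, (if_neg (by omega)).symm⟩)
    (by simp [mergeTop]) (by simp [mergeTop]) 0 hn

lemma LowestRankConsistent.eq_geomRule_succ (h : LowestRankConsistent φ) (hlam : lam ≤ 1)
    {n : ℕ} (hn : 0 < n) (ih : ∀ r z, Valid n r z → ∀ i < n, φ n r z i = geomRule lam n r z i)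
    {r z : ℕ → ℝ} (hv : Valid (n + 1) r z) (h₀ : φ (n + 1) r z 0 = geomRule lam (n + 1) r z 0) :
    ∀ i < n + 1, φ (n + 1) r z i = geomRule lam (n + 1) r z i := by
  have hvd := valid_dropLowest hn hv (h₀ ▸ geomRule_zero_le hlam (by omega) hv)
  rintro (_ | i) hi
  · exact h₀
  · rw [h (n + 1) r z hv (by omega) hvd (i + 1) (by omega) hi, Nat.add_sub_cancel,
      Nat.add_sub_cancel, ih _ _ hvd i (by omega), h₀, geomRule_succ_eq_dropLowest (by omega)]

theorem eq_geomRule_of_apply_two_zero (hφ : IsRule φ) (hlrc : LowestRankConsistent φ)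
    (hsplit : HighestRankSplittingNeutral φ) (hlam : lam ≤ 1)
    (h₂ : ∀ r z, Valid 2 r z → φ 2 r z 0 = z 0 + lam * (r 0 - z 0)) :
    ∀ m r z, Valid m r z → ∀ i < m, φ m r z i = geomRule lam m r z i := by
  intro m
  induction m with
  | zero => exact fun _ _ hv => absurd hv.1 (lt_irrefl 0)
  | succ n ih =>
    intro r z hv
    rcases Nat.eq_zero_or_pos n with rfl | hn
    · intro i hi
      obtain rfl : i = 0 := by omega
      rw [hφ.apply_one hv, geomRule_one]
    refine hlrc.eq_geomRule_succ hlam hn ih hv ?_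
    rw [geomRule_zero (by omega)]
    rcases Nat.lt_or_ge 1 n with hn₁ | hn₁
    · rw [hsplit.apply_zero hn₁ hv, ih _ _ (valid_mergeTop hn hv) 0 hn, geomRule_zero hn₁]
      simp only [mergeTop, if_neg (show 0 ≠ n - 1 by omega)]
    · obtain rfl : n = 1 := by omega
      exact h₂ r z hv

end Induction

theorem characterization_need_adjusted_geometric_rules
    (φ : ℕ → (ℕ → ℝ) → (ℕ → ℝ) → ℕ → ℝ)
    -- φ is a rule: nonnegative allocations satisfying balance
    (hrule : ∀ m r z, Valid m r z →
      (∀ i < m, 0 ≤ φ m r z i) ∧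
      ∑ i ∈ Finset.range m, φ m r z i = ∑ i ∈ Finset.range m, r i)
    -- needs lower bound
    (hnlb : ∀ m r z, Valid m r z → ∀ i < m, z i ≤ φ m r z i)
    -- lowest rank consistency
    (hlrc : ∀ m r z, Valid m r z → 2 ≤ m →
      Valid (m - 1)
        (fun j => if j = 0 then r 1 + r 0 - φ m r z 0 else r (j + 1))
        (fun j => z (j + 1)) →
      ∀ i, 1 ≤ i → i < m →
        φ m r z i =
          φ (m - 1)
            (fun j => if j = 0 then r 1 + r 0 - φ m r z 0 else r (j + 1))
            (fun j => z (j + 1)) (i - 1))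
    -- highest rank independence
    (hhri : ∀ m r z r' z', Valid m r z → Valid m r' z' →
      (∀ i, i + 1 < m → r i = r' i ∧ z i = z' i) →
      ∀ i, i + 1 < m → φ m r z i = φ m r' z' i)
    -- highest rank splitting neutrality
    (hhrsn : ∀ m r z r' z', Valid m r z → Valid (m + 1) r' z' →
      (∀ j, j + 1 < m → r' j = r j ∧ z' j = z j) →
      r' (m - 1) + r' m = r (m - 1) →
      z' (m - 1) + z' m = z (m - 1) →
      ∀ i, i + 1 < m → φ (m + 1) r' z' i = φ m r z i)
    -- bilateral linearity
    (hbl : ∀ r z r' z' α β, 0 < α → 0 < β → Valid 2 r z → Valid 2 r' z' →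
      ∀ i < 2,
        φ 2 (fun j => α * r j + β * r' j) (fun j => α * z j + β * z' j) i =
          α * φ 2 r z i + β * φ 2 r' z' i) :
    ∃ lam ∈ Set.Icc (0:ℝ) 1,
      ∀ m r z, Valid m r z → ∀ i < m, φ m r z i = geomRule lam m r z i := by
  obtain ⟨lam, hlam, h₂⟩ := exists_apply_two_zero_eq hrule hnlb hhri hbl
  exact ⟨lam, hlam, eq_geomRule_of_apply_two_zero hrule hlrc hhrsn hlam.2 h₂⟩
end

section
/- In the two-agent base case: if a rule φ satisfies balance, needs lower bound, highest rank independence, and bilateral linearity on two-agent problems, then there exists λ ∈ [0,1], independent of the problem, such that φ_1({1,2}, r, z) = z_1 + λ(r_1 - z_1) for every two-agent problem (r, z) with z ≤ r. -/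
noncomputable section

/-- A valid two-agent problem: nonnegative needs covered by own revenues. -/
def Valid2 (r z : ℕ → ℝ) : Prop := ∀ i < 2, 0 ≤ z i ∧ z i ≤ r i

private def cr (a : ℝ) : ℕ → ℝ := fun j => if j = 0 then a else 0

private lemma cr_valid {a b : ℝ} (hb : 0 ≤ b) (hba : b ≤ a) : Valid2 (cr a) (cr b) := by
  intro i hi
  interval_cases i <;> simp [cr] <;> exact ⟨hb, hba⟩

private lemma cr_comb (α β a b : ℝ) :
    (fun j => α * cr a j + β * cr b j) = cr (α * a + β * b) := by
  funext j; simp only [cr]; split <;> ring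

theorem two_agent_base_case
    (φ : (ℕ → ℝ) → (ℕ → ℝ) → ℕ → ℝ)
    -- balance and nonnegativity
    (hrule : ∀ r z, Valid2 r z →
      (∀ i < 2, 0 ≤ φ r z i) ∧ φ r z 0 + φ r z 1 = r 0 + r 1)
    -- needs lower bound
    (hnlb : ∀ r z, Valid2 r z → ∀ i < 2, z i ≤ φ r z i)
    -- highest rank independence: the bottom agent's award does not depend on
    -- the top agent's revenue and need
    (hhri : ∀ r z r' z', Valid2 r z → Valid2 r' z' →
      r 0 = r' 0 → z 0 = z' 0 → φ r z 0 = φ r' z' 0)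
    -- bilateral linearity
    (hbl : ∀ r z r' z' (α β : ℝ), 0 < α → 0 < β → Valid2 r z → Valid2 r' z' →
      ∀ i < 2,
        φ (fun j => α * r j + β * r' j) (fun j => α * z j + β * z' j) i =
          α * φ r z i + β * φ r' z' i) :
    ∃ lam ∈ Set.Icc (0:ℝ) 1,
      ∀ r z, Valid2 r z → φ r z 0 = z 0 + lam * (r 0 - z 0) := by
  have v00 : Valid2 (cr 0) (cr 0) := cr_valid le_rfl le_rfl
  have v10 : Valid2 (cr 1) (cr 0) := cr_valid le_rfl zero_le_one
  have v11 : Valid2 (cr 1) (cr 1) := cr_valid zero_le_one le_rfl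
  -- φ on zero problem is 0
  have hz : φ (cr 0) (cr 0) 0 = 0 := by
    obtain ⟨hpos, hbal⟩ := hrule _ _ v00
    have h0 := hpos 0 (by norm_num)
    have h1 := hpos 1 (by norm_num)
    simp only [cr] at hbal
    norm_num at hbal
    linarith
  -- φ on (1,1) problem is 1
  have g11 : φ (cr 1) (cr 1) 0 = 1 := by
    obtain ⟨hpos, hbal⟩ := hrule _ _ v11
    have h1 := hnlb _ _ v11 1 (by norm_num)
    have h0 := hnlb _ _ v11 0 (by norm_num)
    simp only [cr] at hbal h1 h0
    norm_num at hbal h1 h0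
    linarith
  set lam := φ (cr 1) (cr 0) 0 with hlam
  have hlam0 : 0 ≤ lam := (hrule _ _ v10).1 0 (by norm_num)
  have hlam1 : lam ≤ 1 := by
    obtain ⟨hpos, hbal⟩ := hrule _ _ v10
    have h1 := hnlb _ _ v10 1 (by norm_num)
    simp only [cr] at hbal h1
    norm_num at hbal h1
    linarith
  refine ⟨lam, ⟨hlam0, hlam1⟩, ?_⟩
  intro r z hv
  obtain ⟨hz0, hzr⟩ := hv 0 (by norm_num)
  have key : ∀ a b : ℝ, 0 ≤ b → b ≤ a → φ (cr a) (cr b) 0 = b + lam * (a - b) := by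
    intro a b hb hba
    rcases eq_or_lt_of_le hb with hb0 | hbpos
    · rcases eq_or_lt_of_le hba with hab | hapos
      · -- a = b = 0
        rw [← hb0, ← hab, ← hb0, hz]; ring
      · -- b = 0 < a
        have := hbl (cr 1) (cr 0) (cr 0) (cr 0) a 1 (by rw [← hb0] at hapos; linarith)
          one_pos v10 v00 0 (by norm_num)
        simp only [cr_comb] at this
        norm_num at this
        rw [← hb0]
        rw [this, hz]
        ring
    · rcases eq_or_lt_of_le hba with hab | hapos
      · -- 0 < b = a
        have := hbl (cr 1) (cr 1) (cr 0) (cr 0) b 1 hbpos one_pos v11 v00 0 (by norm_num)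
        simp only [cr_comb] at this
        norm_num at this
        rw [← hab, this, g11, hz]
        ring
      · -- 0 < b < a
        have := hbl (cr 1) (cr 0) (cr 1) (cr 1) (a - b) b (by linarith) hbpos v10 v11 0
          (by norm_num)
        simp only [cr_comb] at this
        have e1 : (a - b) * 1 + b * 1 = a := by ring
        have e2 : (a - b) * 0 + b * 1 = b := by ring
        rw [e1, e2] at this
        rw [this, g11]
        ring
  have hr0 : φ r z 0 = φ (cr (r 0)) (cr (z 0)) 0 :=
    hhri r z _ _ hv (cr_valid hz0 hzr) (by simp [cr]) (by simp [cr])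
  rw [hr0, key _ _ hz0 hzr]

end
end

section
/- (Characterization of the need-adjusted full-transfer rule) A rule φ on linear hierarchy problems with needs satisfying highest rank splitting neutrality, hierarchical order preservation, and needs lower bound must be the need-adjusted full-transfer rule: φ_i(M,r,z) = z_i for i < m and φ_m(M,r,z) = z_m + Σ_{j∈M}(r_j - z_j). -/
open Finset

theorem nonpos_of_forall_nat_mul_le {α : Type*} [Field α] [LinearOrder α]
    [IsStrictOrderedRing α] [Archimedean α] {x C : α} (h : ∀ k : ℕ, (k : α) * x ≤ C) : x ≤ 0 := by
  by_contra! hx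
  obtain ⟨k, hk⟩ := exists_nat_gt (C / x)
  exact (h k).not_gt ((div_lt_iff₀ hx).1 hk)

/-- The data beyond the top are shifted rather than truncated, so that `splitTop n 0 f = f` on the
nose: a rule sees its data outside the hierarchy too. -/
def splitTop (n k : ℕ) (f : ℕ → ℝ) (j : ℕ) : ℝ :=
  if j < n then f j else if j < n + k then 0 else f (j - k)

section splitTop

variable {n k j : ℕ} {f : ℕ → ℝ}

@[simp]
theorem splitTop_zero : splitTop n 0 f = f := by
  ext j
  simp only [splitTop, add_zero, Nat.sub_zero]
  split_ifs <;> rfl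

theorem splitTop_of_lt (h : j < n) : splitTop n k f j = f j := if_pos h

theorem splitTop_succ_of_lt (h : j < n + k) : splitTop n (k + 1) f j = splitTop n k f j := by
  simp only [splitTop]
  split_ifs <;> first | rfl | omega

theorem splitTop_succ_add_add_one :
    splitTop n (k + 1) f (n + k) + splitTop n (k + 1) f (n + k + 1) = splitTop n k f (n + k) := by
  simp only [splitTop]
  split_ifs <;> first | omega | skip
  rw [zero_add]
  congr 1
  omega

theorem valid_splitTop {r z : ℕ → ℝ} (h : Valid (n + 1) r z) :
    Valid (n + k + 1) (splitTop n k r) (splitTop n k z) := by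
  refine ⟨Nat.succ_pos _, fun j hj => ?_⟩
  simp only [splitTop]
  split_ifs
  · exact h.2 j (by omega)
  · exact ⟨le_rfl, le_rfl⟩
  · exact h.2 (j - k) (by omega)

theorem sum_range_splitTop :
    ∑ j ∈ range (n + k + 1), splitTop n k f j = ∑ j ∈ range (n + 1), f j := by
  induction k with
  | zero => simp
  | succ k ih =>
    rw [← ih, show n + (k + 1) + 1 = n + k + 1 + 1 by ring, sum_range_succ, sum_range_succ,
      add_assoc, splitTop_succ_add_add_one, sum_range_succ,
      sum_congr rfl fun j hj => splitTop_succ_of_lt (mem_range.1 hj)]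

end splitTop

section Axioms

variable (φ : ℕ → (ℕ → ℝ) → (ℕ → ℝ) → ℕ → ℝ)

def IsBalanced : Prop :=
  ∀ m r z, Valid m r z → ∑ i ∈ range m, φ m r z i = ∑ i ∈ range m, r i

def IsHighestRankSplittingNeutral : Prop :=
  ∀ m r z r' z', Valid m r z → Valid (m + 1) r' z' →
    (∀ j, j + 1 < m → r' j = r j ∧ z' j = z j) →
    r' (m - 1) + r' m = r (m - 1) →
    z' (m - 1) + z' m = z (m - 1) →
    ∀ i, i + 1 < m → φ (m + 1) r' z' i = φ m r z i

def IsHierarchicalOrderPreserving : Prop :=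
  ∀ m r z, Valid m r z → ∀ i < m, ∀ j < m, j ≤ i → φ m r z j - z j ≤ φ m r z i - z i

def IsNeedsLowerBounded : Prop :=
  ∀ m r z, Valid m r z → ∀ i < m, z i ≤ φ m r z i

end Axioms

variable {φ : ℕ → (ℕ → ℝ) → (ℕ → ℝ) → ℕ → ℝ} {n : ℕ} {r z : ℕ → ℝ}

theorem IsHighestRankSplittingNeutral.apply_splitTop (hφ : IsHighestRankSplittingNeutral φ)
    (h : Valid (n + 1) r z) (k : ℕ) {i : ℕ} (hi : i < n) :
    φ (n + k + 1) (splitTop n k r) (splitTop n k z) i = φ (n + 1) r z i := by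
  induction k with
  | zero => simp
  | succ k ih =>
    rw [← ih]
    exact hφ (n + k + 1) _ _ _ _ (valid_splitTop h) (valid_splitTop (k := k + 1) h)
      (fun j hj => ⟨splitTop_succ_of_lt (by omega), splitTop_succ_of_lt (by omega)⟩)
      splitTop_succ_add_add_one splitTop_succ_add_add_one i (by omega)

theorem sum_surplus_le_of_subset (hbal : IsBalanced φ) (hnlb : IsNeedsLowerBounded φ) {m : ℕ}
    (h : Valid m r z) {s : Finset ℕ} (hs : s ⊆ range m) :
    ∑ j ∈ s, (φ m r z j - z j) ≤ ∑ j ∈ range m, (r j - z j) := by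
  calc ∑ j ∈ s, (φ m r z j - z j)
      ≤ ∑ j ∈ range m, (φ m r z j - z j) :=
        sum_le_sum_of_subset_of_nonneg hs fun j hj _ =>
          sub_nonneg.2 (hnlb m r z h j (mem_range.1 hj))
    _ = ∑ j ∈ range m, (r j - z j) := by rw [sum_sub_distrib, hbal m r z h, sum_sub_distrib]

theorem surplus_mul_le_sum (hbal : IsBalanced φ) (hhrsn : IsHighestRankSplittingNeutral φ)
    (hhop : IsHierarchicalOrderPreserving φ) (hnlb : IsNeedsLowerBounded φ)
    (h : Valid (n + 1) r z) {i : ℕ} (hi : i < n) (k : ℕ) :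
    ((k : ℝ) + 1) * (φ (n + 1) r z i - z i) ≤ ∑ j ∈ range (n + 1), (r j - z j) := by
  have hk := valid_splitTop (k := k) h
  have hlow : ∀ j ∈ Ico n (n + k + 1), φ (n + 1) r z i - z i
      ≤ φ (n + k + 1) (splitTop n k r) (splitTop n k z) j - splitTop n k z j := by
    intro j hj
    rw [← hhrsn.apply_splitTop h k hi, ← splitTop_of_lt (k := k) (f := z) hi]
    exact hhop _ _ _ hk j (mem_Ico.1 hj).2 i (by omega) (hi.le.trans (mem_Ico.1 hj).1)
  calc ((k : ℝ) + 1) * (φ (n + 1) r z i - z i)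
      = ∑ _j ∈ Ico n (n + k + 1), (φ (n + 1) r z i - z i) := by
        rw [sum_const, Nat.card_Ico, nsmul_eq_mul, show n + k + 1 - n = k + 1 by omega]
        push_cast
        rfl
    _ ≤ ∑ j ∈ Ico n (n + k + 1),
          (φ (n + k + 1) (splitTop n k r) (splitTop n k z) j - splitTop n k z j) :=
        sum_le_sum hlow
    _ ≤ ∑ j ∈ range (n + k + 1), (splitTop n k r j - splitTop n k z j) :=
        sum_surplus_le_of_subset hbal hnlb hk fun j hj => mem_range.2 (mem_Ico.1 hj).2
    _ = ∑ j ∈ range (n + 1), (r j - z j) := by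
        rw [sum_sub_distrib, sum_range_splitTop, sum_range_splitTop, ← sum_sub_distrib]

theorem apply_eq_need_of_lt (hbal : IsBalanced φ) (hhrsn : IsHighestRankSplittingNeutral φ)
    (hhop : IsHierarchicalOrderPreserving φ) (hnlb : IsNeedsLowerBounded φ)
    (h : Valid (n + 1) r z) {i : ℕ} (hi : i < n) : φ (n + 1) r z i = z i := by
  have hpos : 0 ≤ φ (n + 1) r z i - z i := sub_nonneg.2 (hnlb _ _ _ h i (by omega))
  have hnonpos : φ (n + 1) r z i - z i ≤ 0 :=
    nonpos_of_forall_nat_mul_le fun k => (mul_le_mul_of_nonneg_right (by linarith) hpos).trans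
      (surplus_mul_le_sum hbal hhrsn hhop hnlb h hi k)
  linarith

theorem apply_top_eq_need_add_sum (hbal : IsBalanced φ) (h : Valid (n + 1) r z)
    (hlow : ∀ i < n, φ (n + 1) r z i = z i) :
    φ (n + 1) r z n = z n + ∑ j ∈ range (n + 1), (r j - z j) := by
  have hsum := hbal _ _ _ h
  rw [sum_range_succ, sum_congr rfl fun i hi => hlow i (mem_range.1 hi)] at hsum
  rw [sum_sub_distrib, sum_range_succ z]
  linarith

theorem characterization_need_adjusted_full_transfer_rule
    (φ : ℕ → (ℕ → ℝ) → (ℕ → ℝ) → ℕ → ℝ)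
    -- φ is a rule: nonnegative allocations satisfying balance
    (hrule : ∀ m r z, Valid m r z →
      (∀ i < m, 0 ≤ φ m r z i) ∧
      ∑ i ∈ Finset.range m, φ m r z i = ∑ i ∈ Finset.range m, r i)
    -- highest rank splitting neutrality
    (hhrsn : ∀ m r z r' z', Valid m r z → Valid (m + 1) r' z' →
      (∀ j, j + 1 < m → r' j = r j ∧ z' j = z j) →
      r' (m - 1) + r' m = r (m - 1) →
      z' (m - 1) + z' m = z (m - 1) →
      ∀ i, i + 1 < m → φ (m + 1) r' z' i = φ m r z i)
    -- hierarchical order preservation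
    (hhop : ∀ m r z, Valid m r z → ∀ i < m, ∀ j < m, j ≤ i →
      φ m r z j - z j ≤ φ m r z i - z i)
    -- needs lower bound
    (hnlb : ∀ m r z, Valid m r z → ∀ i < m, z i ≤ φ m r z i) :
    ∀ m r z, Valid m r z →
      (∀ i, i + 1 < m → φ m r z i = z i) ∧
      φ m r z (m - 1) =
        z (m - 1) + ∑ j ∈ Finset.range m, (r j - z j) := by
  intro m r z hv
  obtain ⟨n, rfl⟩ := Nat.exists_eq_add_one_of_ne_zero hv.1.ne'
  have hbal : IsBalanced φ := fun m r z h => (hrule m r z h).2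
  have hlow (i : ℕ) (hi : i < n) : φ (n + 1) r z i = z i :=
    apply_eq_need_of_lt hbal hhrsn hhop hnlb hv hi
  exact ⟨fun i hi => hlow i (by omega), apply_top_eq_need_add_sum hbal hv hlow⟩
end

section
/- The need-adjusted serial rule φ^s, defined by φ^s_i(M,r,z) = z_i + Σ_{j≤i} (r_j - z_j)/(m - j + 1) for all i in M = {1,...,m}, is a valid rule: it produces nonnegative allocations satisfying balance Σ_i φ^s_i = Σ_i r_i, and satisfies needs lower bound φ^s_i ≥ z_i. -/
/-- The need-adjusted serial rule on the hierarchy `{0, ..., m-1}`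
(agent `m-1` is the top-ranked agent): each agent keeps his need and shares
his surplus equally with himself and all his superiors. -/
noncomputable def serialRule (m : ℕ) (r z : ℕ → ℝ) (i : ℕ) : ℝ :=
  z i + ∑ j ∈ Finset.range (i + 1), (r j - z j) / ((m - j : ℕ) : ℝ)

open Finset

theorem Finset.sum_range_sum_range_succ {M : Type*} [AddCommMonoid M] (m : ℕ) (f : ℕ → M) :
    ∑ i ∈ range m, ∑ j ∈ range (i + 1), f j = ∑ j ∈ range m, (m - j) • f j := by
  induction m with
  | zero => simp
  | succ n ih =>
    have hsucc : ∀ j ∈ range n, (n + 1 - j) • f j = (n - j) • f j + f j := fun j hj => by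
      rw [Nat.sub_add_comm (mem_range.mp hj).le, succ_nsmul]
    rw [sum_range_succ, ih, sum_range_succ (fun j => (n + 1 - j) • f j), sum_congr rfl hsucc,
      sum_add_distrib, Nat.add_sub_cancel_left, one_nsmul, add_assoc, ← sum_range_succ]

theorem le_serialRule {m : ℕ} {r z : ℕ → ℝ} {i : ℕ} (hzr : ∀ j ≤ i, z j ≤ r j) :
    z i ≤ serialRule m r z i :=
  le_add_of_nonneg_right <| sum_nonneg fun j hj =>
    div_nonneg (sub_nonneg.mpr <| hzr j <| Nat.lt_succ_iff.mp <| mem_range.mp hj)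
      (Nat.cast_nonneg _)

theorem sum_serialRule (m : ℕ) (r z : ℕ → ℝ) :
    ∑ i ∈ range m, serialRule m r z i = ∑ i ∈ range m, r i := by
  -- agent `j`'s surplus is split among the `m - j` agents `j, ..., m - 1`
  have hshare : ∀ j ∈ range m, (m - j) • ((r j - z j) / ((m - j : ℕ) : ℝ)) = r j - z j :=
    fun j hj => by
      have hshares : ((m - j : ℕ) : ℝ) ≠ 0 :=
        Nat.cast_ne_zero.mpr (Nat.sub_ne_zero_of_lt (mem_range.mp hj))
      rw [nsmul_eq_mul, mul_div_cancel₀ _ hshares]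
  simp only [serialRule]
  rw [sum_add_distrib, sum_range_sum_range_succ, sum_congr rfl hshare, sum_sub_distrib,
    add_sub_cancel]

theorem serial_rule_is_valid_rule_general
    (m : ℕ) (r z : ℕ → ℝ)
    (hval : ∀ i < m, 0 ≤ z i ∧ z i ≤ r i) :
    (∀ i < m, 0 ≤ serialRule m r z i) ∧
    (∑ i ∈ Finset.range m, serialRule m r z i = ∑ i ∈ Finset.range m, r i) ∧
    (∀ i < m, z i ≤ serialRule m r z i) := by
  have hneed : ∀ i < m, z i ≤ serialRule m r z i := fun i hi =>
    le_serialRule fun j hj => (hval j (lt_of_le_of_lt hj hi)).2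
  exact ⟨fun i hi => (hval i hi).1.trans (hneed i hi), sum_serialRule m r z, hneed⟩

theorem serial_rule_is_valid_rule
    (m : ℕ) (hm : 1 ≤ m) (r z : ℕ → ℝ)
    (hval : ∀ i < m, 0 ≤ z i ∧ z i ≤ r i) :
    (∀ i < m, 0 ≤ serialRule m r z i) ∧
    (∑ i ∈ Finset.range m, serialRule m r z i = ∑ i ∈ Finset.range m, r i) ∧
    (∀ i < m, z i ≤ serialRule m r z i) :=
  serial_rule_is_valid_rule_general m r z hval
end

section
/- The need-adjusted serial rule satisfies lowest rank consistency: for m ≥ 2, removing agent 1 after awarding him φ^s_1(M,r,z) = z_1 + (r_1 - z_1)/m and setting agent 2's new revenue to r_2 + r_1 - φ^s_1(M,r,z), the serial rule applied to the reduced (m-1)-agent problem gives each agent i ∈ {2,...,m} the same amount as in the original problem. -/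
theorem serialRule_zero (m : ℕ) (r z : ℕ → ℝ) :
    serialRule m r z 0 = z 0 + (r 0 - z 0) / m := by
  simp [serialRule]

theorem serialRule_succ (m k : ℕ) (r z : ℕ → ℝ) :
    serialRule m r z (k + 1) =
      (r 0 - z 0) / m + serialRule (m - 1) (fun j => r (j + 1)) (fun j => z (j + 1)) k := by
  simp only [serialRule, Finset.sum_range_succ' _ (k + 1), Nat.sub_sub, Nat.add_comm 1,
    Nat.sub_zero]
  ring

theorem serialRule_of_lowest_add (m i : ℕ) (r r' z : ℕ → ℝ) (δ : ℝ)
    (hr₀ : r' 0 = r 0 + δ) (hr : ∀ j, j ≠ 0 → r' j = r j) :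
    serialRule m r' z i = serialRule m r z i + δ / m := by
  simp only [serialRule, Finset.sum_range_succ', hr₀, Nat.sub_zero]
  rw [Finset.sum_congr rfl fun j _ => by rw [hr (j + 1) j.succ_ne_zero]]
  ring

theorem sub_serialRule_zero_div (m : ℕ) (hm : m ≠ 1) (r z : ℕ → ℝ) :
    (r 0 - serialRule m r z 0) / ((m - 1 : ℕ) : ℝ) = (r 0 - z 0) / m := by
  rw [serialRule_zero]
  rcases m with _ | _ | m
  · simp
  · exact absurd rfl hm
  · push_cast [Nat.add_sub_cancel]
    field_simp
    ring

theorem serial_rule_lowest_rank_consistency_general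
    (m : ℕ) (r z : ℕ → ℝ) :
    serialRule m r z 0 = z 0 + (r 0 - z 0) / (m : ℝ) ∧
    ∀ i, 1 ≤ i → i < m →
      serialRule m r z i =
        serialRule (m - 1)
          (fun j => if j = 0 then r 1 + r 0 - serialRule m r z 0 else r (j + 1))
          (fun j => z (j + 1)) (i - 1) := by
  refine ⟨serialRule_zero m r z, fun i hi him => ?_⟩
  obtain ⟨k, rfl⟩ := Nat.exists_eq_add_of_le' hi
  have hm : m ≠ 1 := by omega
  rw [serialRule_succ, Nat.add_sub_cancel,
    serialRule_of_lowest_add (m - 1) k (fun j => r (j + 1)) _ _ (r 0 - serialRule m r z 0)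
      (by simp only [if_pos]; ring) (fun j hj => if_neg hj),
    sub_serialRule_zero_div m hm]
  ring

theorem serial_rule_lowest_rank_consistency
    (m : ℕ) (hm : 2 ≤ m) (r z : ℕ → ℝ)
    (hval : ∀ i < m, 0 ≤ z i ∧ z i ≤ r i) :
    serialRule m r z 0 = z 0 + (r 0 - z 0) / (m : ℝ) ∧
    ∀ i, 1 ≤ i → i < m →
      serialRule m r z i =
        serialRule (m - 1)
          (fun j => if j = 0 then r 1 + r 0 - serialRule m r z 0 else r (j + 1))
          (fun j => z (j + 1)) (i - 1) :=
  serial_rule_lowest_rank_consistency_general m r z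
end

section
/- On the larger domain where only aggregate revenues must cover aggregate needs (Σ r_i ≥ Σ z_i, but possibly r_i < z_i for some i), a rule satisfying balance, highest rank independence, and needs lower bound must be the need-adjusted full-transfer rule: φ_i = z_i for all i < m and φ_m = z_m + Σ_j (r_j - z_j). -/
/-!
Raise the need of the last agent by the aggregate surplus `∑ (r j - z j)`. In the resulting
problem needs exhaust revenues, so balance and the needs lower bound force every agent to get
exactly its need. Highest rank independence carries these allocations of the first `m - 1`
agents back to the original problem, and balance then determines the last agent's share.
-/

/-- A problem in the extended domain `Z*`: nonnegative revenues and needs,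
with aggregate revenues covering aggregate needs. -/
def ValidStar (m : ℕ) (r z : ℕ → ℝ) : Prop :=
  0 < m ∧ (∀ i < m, 0 ≤ r i ∧ 0 ≤ z i) ∧
    ∑ i ∈ Finset.range m, z i ≤ ∑ i ∈ Finset.range m, r i

open Finset

theorem Finset.sum_update_add_of_mem {ι M : Type*} [AddCommMonoid M] [DecidableEq ι]
    {s : Finset ι} {i : ι} (hi : i ∈ s) (f : ι → M) (c : M) :
    ∑ x ∈ s, Function.update f i (f i + c) x = ∑ x ∈ s, f x + c := by
  rw [sum_update_of_mem hi, sum_eq_add_sum_sdiff_singleton_of_mem hi f, add_right_comm]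

noncomputable def lastNeedRaised (m : ℕ) (r z : ℕ → ℝ) : ℕ → ℝ :=
  Function.update z (m - 1) (z (m - 1) + ∑ j ∈ range m, (r j - z j))

lemma lastNeedRaised_of_lt {m i : ℕ} (r z : ℕ → ℝ) (hi : i + 1 < m) :
    lastNeedRaised m r z i = z i :=
  Function.update_of_ne (by omega) _ _

lemma sum_lastNeedRaised {m : ℕ} (hm : 0 < m) (r z : ℕ → ℝ) :
    ∑ i ∈ range m, lastNeedRaised m r z i = ∑ i ∈ range m, r i := by
  rw [lastNeedRaised, sum_update_add_of_mem (mem_range.2 (by omega)), sum_sub_distrib]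
  abel

lemma validStar_lastNeedRaised {m : ℕ} {r z : ℕ → ℝ} (hv : ValidStar m r z) :
    ValidStar m r (lastNeedRaised m r z) := by
  obtain ⟨hm, hnn, hsum⟩ := hv
  have hsurplus : 0 ≤ ∑ j ∈ range m, (r j - z j) := by
    rw [sum_sub_distrib]; linarith
  refine ⟨hm, fun i hi => ⟨(hnn i hi).1, ?_⟩, (sum_lastNeedRaised hm r z).le⟩
  rcases eq_or_ne i (m - 1) with rfl | hne
  · rw [lastNeedRaised, Function.update_self]
    linarith [(hnn (m - 1) hi).2]
  · rw [lastNeedRaised, Function.update_of_ne hne]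
    exact (hnn i hi).2

lemma last_eq_add_sum_sub_of_sum_eq {m : ℕ} (hm : 0 < m) {f r z : ℕ → ℝ}
    (hfirst : ∀ i, i + 1 < m → f i = z i)
    (hsum : ∑ i ∈ range m, f i = ∑ i ∈ range m, r i) :
    f (m - 1) = z (m - 1) + ∑ j ∈ range m, (r j - z j) := by
  obtain ⟨n, rfl⟩ : ∃ n, m = n + 1 := ⟨m - 1, by omega⟩
  have hprefix : ∑ i ∈ range n, f i = ∑ i ∈ range n, z i :=
    sum_congr rfl fun i hi => hfirst i (by simpa using hi)
  rw [sum_range_succ, hprefix] at hsum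
  rw [sum_sub_distrib, sum_range_succ z, Nat.add_sub_cancel]
  linarith

theorem full_transfer_on_extended_domain
    (φ : ℕ → (ℕ → ℝ) → (ℕ → ℝ) → ℕ → ℝ)
    -- φ is a rule: nonnegative allocations satisfying balance
    (hrule : ∀ m r z, ValidStar m r z →
      (∀ i < m, 0 ≤ φ m r z i) ∧
      ∑ i ∈ Finset.range m, φ m r z i = ∑ i ∈ Finset.range m, r i)
    -- highest rank independence
    (hhri : ∀ m r z r' z', ValidStar m r z → ValidStar m r' z' →
      (∀ i, i + 1 < m → r i = r' i ∧ z i = z' i) →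
      ∀ i, i + 1 < m → φ m r z i = φ m r' z' i)
    -- needs lower bound on the extended domain
    (hnlb : ∀ m r z, ValidStar m r z → ∀ i < m, z i ≤ φ m r z i) :
    ∀ m r z, ValidStar m r z →
      (∀ i, i + 1 < m → φ m r z i = z i) ∧
      φ m r z (m - 1) = z (m - 1) + ∑ j ∈ Finset.range m, (r j - z j) := by
  intro m r z hv
  set z' := lastNeedRaised m r z
  have hv' : ValidStar m r z' := validStar_lastNeedRaised hv
  have hexact : ∀ i < m, z' i = φ m r z' i := by
    have h := (sum_eq_sum_iff_of_le fun i hi => hnlb m r z' hv' i (mem_range.1 hi)).1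
      (by rw [(hrule m r z' hv').2, sum_lastNeedRaised hv.1])
    exact fun i hi => h i (mem_range.2 hi)
  have hfirst : ∀ i, i + 1 < m → φ m r z i = z i := by
    intro i hi
    rw [hhri m r z r z' hv hv' (fun j hj => ⟨rfl, (lastNeedRaised_of_lt r z hj).symm⟩) i hi,
      ← hexact i (by omega)]
    exact lastNeedRaised_of_lt r z hi
  exact ⟨hfirst, last_eq_add_sum_sub_of_sum_eq hv.1 hfirst (hrule m r z hv).2⟩
end

section
/- (Two-agent folk solution characterization) A rule φ on two-agent problems satisfies balance, highest rank independence, and canonical bilateral fairness if and only if φ({1,2},r,z) = (z_1 + (r_1 - z_1)/2, r_2 + (r_1 - z_1)/2) for every two-agent problem with z ≤ r. -/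
theorem two_agent_folk_solution_characterization
    (φ : (ℕ → ℝ) → (ℕ → ℝ) → ℕ → ℝ) :
    -- balance, highest rank independence, and canonical bilateral fairness
    ((∀ r z, Valid2 r z → φ r z 0 + φ r z 1 = r 0 + r 1) ∧
     (∀ r z r' z', Valid2 r z → Valid2 r' z' →
        r 0 = r' 0 → z 0 = z' 0 → φ r z 0 = φ r' z' 0) ∧
     (∀ r₁ z₁ : ℝ, 0 ≤ z₁ → z₁ ≤ r₁ →
        φ (fun j => if j = 0 then r₁ else 0) (fun j => if j = 0 then z₁ else 0) 0
            = z₁ + (r₁ - z₁) / 2 ∧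
        φ (fun j => if j = 0 then r₁ else 0) (fun j => if j = 0 then z₁ else 0) 1
            = (r₁ - z₁) / 2))
    ↔
    -- the folk solution
    (∀ r z, Valid2 r z →
      φ r z 0 = z 0 + (r 0 - z 0) / 2 ∧ φ r z 1 = r 1 + (r 0 - z 0) / 2) := by
  constructor
  · rintro ⟨bal, hri, can⟩ r z hv
    have h0 := hv 0 (by norm_num)
    have hvc : Valid2 (fun j => if j = 0 then r 0 else 0)
        (fun j => if j = 0 then z 0 else 0) := by
      intro i _
      by_cases h : i = 0 <;> simp [h, h0.1, h0.2]
    have key : φ r z 0 = z 0 + (r 0 - z 0) / 2 := by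
      have := hri r z _ _ hv hvc (by simp) (by simp)
      rw [this, (can (r 0) (z 0) h0.1 h0.2).1]
    refine ⟨key, ?_⟩
    have := bal r z hv
    linarith
  · rintro hf
    refine ⟨fun r z hv => ?_, fun r z r' z' hv hv' hr hz => ?_, fun r₁ z₁ h0 h1 => ?_⟩
    · obtain ⟨a, b⟩ := hf r z hv; linarith
    · rw [(hf r z hv).1, (hf r' z' hv').1, hr, hz]
    · have hvc : Valid2 (fun j => if j = 0 then r₁ else 0)
          (fun j => if j = 0 then z₁ else 0) := by
        intro i _
        by_cases h : i = 0 <;> simp [h, h0, h1]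
      obtain ⟨a, b⟩ := hf _ _ hvc
      simp at a b
      exact ⟨a, b⟩
end
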